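/- Let μ₀ be a nonzero non-negative finite measure on (0,∞) with M₀ = ∫ m dμ₀ ∈ (0,∞), K = ∫ m² dμ₀ ∈ (0,∞], g₀(x) = ∫ m x^m dμ₀, and define φ_t(x) = x e^{t(M₀ − g₀(x))} for t ≥ 0, x ∈ [0,1]. Then for t ≤ 1/K (interpreting 1/∞ = 0), φ_t is strictly increasing on [0,1]; and for t > 1/K there is a unique m_t ∈ (0,1) with t m_t g₀'(m_t) = 1, φ_t is increasing on [0, m_t] and decreasing on [m_t, 1]. -/

import Mathlib

open MeasureTheory Set Filter Topology ENNReal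

/-!
Writing `h x = x * g₀' x = ∫ m² xᵐ dμ₀`, one has `φ_t' x = exp (t (M₀ - g₀ x)) * (1 - t h x)`.
The function `h` is continuous and strictly increasing on `[0, 1)`, vanishes at `0`, and by
monotone convergence its supremum is `K`. Hence `t h < 1` on `(0, 1)` when `t ≤ 1/K`, while for
`t > 1/K` the intermediate value theorem gives a unique `m_t` with `h m_t = 1/t`, where `φ_t'`
changes sign. Differentiating under the integral sign is justified by `m bᵐ ≤ 1 / (-log b)` for
`0 < b < 1`, which dominates `m² xᵐ` by a multiple of `m` on `[0, b]`.
-/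

lemma mul_rpow_le_inv_neg_log {b m : ℝ} (hb0 : 0 < b) (hb1 : b < 1) :
    m * b ^ m ≤ (-Real.log b)⁻¹ := by
  have hc : 0 < -Real.log b := neg_pos.2 (Real.log_neg hb0 hb1)
  have hy : -Real.log b * m ≤ Real.exp (-Real.log b * m) := by
    linarith [Real.add_one_le_exp (-Real.log b * m)]
  rw [← one_div, le_div_iff₀ hc, Real.rpow_def_of_pos hb0]
  calc m * Real.exp (Real.log b * m) * -Real.log b
      = (-Real.log b * m) * Real.exp (-(-Real.log b * m)) := by ring_nf
    _ ≤ Real.exp (-Real.log b * m) * Real.exp (-(-Real.log b * m)) := by gcongr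
    _ = 1 := by rw [← Real.exp_add, add_neg_cancel, Real.exp_zero]

lemma norm_mul_rpow_le {x m : ℝ} (hx : x ∈ Icc 0 1) (hm : 0 < m) : ‖m * x ^ m‖ ≤ m := by
  rw [Real.norm_eq_abs, abs_of_nonneg (by have := Real.rpow_nonneg hx.1 m; positivity)]
  exact mul_le_of_le_one_right hm.le (Real.rpow_le_one hx.1 hx.2 hm.le)

lemma norm_sq_mul_rpow_le {x b m : ℝ} (hx : 0 ≤ x) (hxb : x ≤ b) (hb1 : b < 1) (hm : 0 < m) :
    ‖m ^ 2 * x ^ m‖ ≤ (-Real.log b)⁻¹ * m := by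
  rw [Real.norm_eq_abs, abs_of_nonneg (by have := Real.rpow_nonneg hx m; positivity)]
  rcases hx.eq_or_lt with rfl | hx0
  · rw [Real.zero_rpow hm.ne', mul_zero]
    have := Real.log_nonpos hxb hb1.le
    have : 0 ≤ (-Real.log b)⁻¹ := inv_nonneg.2 (by linarith)
    positivity
  calc m ^ 2 * x ^ m ≤ m * (m * b ^ m) := by
        rw [← mul_assoc, ← sq]; gcongr
    _ ≤ m * (-Real.log b)⁻¹ := by
        gcongr; exact mul_rpow_le_inv_neg_log (hx0.trans_le hxb) hb1
    _ = (-Real.log b)⁻¹ * m := mul_comm _ _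

noncomputable def mulRpowIntegral (μ : Measure ℝ) (x : ℝ) : ℝ := ∫ m, m * x ^ m ∂μ

noncomputable def sqMulRpowIntegral (μ : Measure ℝ) (x : ℝ) : ℝ := ∫ m, m ^ 2 * x ^ m ∂μ

section

variable {μ : Measure ℝ}

lemma integrable_mul_rpow (hμ : ∀ᵐ m ∂μ, 0 < m) (hint : Integrable (fun m : ℝ => m) μ)
    {x : ℝ} (hx : x ∈ Icc 0 1) : Integrable (fun m => m * x ^ m) μ := by
  refine hint.mono' (by fun_prop) ?_
  filter_upwards [hμ] with m hm using norm_mul_rpow_le hx hm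

lemma integrable_sq_mul_rpow (hμ : ∀ᵐ m ∂μ, 0 < m) (hint : Integrable (fun m : ℝ => m) μ)
    {x : ℝ} (hx : x ∈ Ico 0 1) : Integrable (fun m => m ^ 2 * x ^ m) μ := by
  refine (hint.const_mul (-Real.log x)⁻¹).mono' (by fun_prop) ?_
  filter_upwards [hμ] with m hm using norm_sq_mul_rpow_le hx.1 le_rfl hx.2 hm

lemma sqMulRpowIntegral_zero (hμ : ∀ᵐ m ∂μ, 0 < m) : sqMulRpowIntegral μ 0 = 0 := by
  refine integral_eq_zero_of_ae ?_
  filter_upwards [hμ] with m hm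
  simp [Real.zero_rpow hm.ne']

lemma strictMonoOn_sqMulRpowIntegral (hμ : ∀ᵐ m ∂μ, 0 < m)
    (hint : Integrable (fun m : ℝ => m) μ) (hμ0 : μ ≠ 0) :
    StrictMonoOn (sqMulRpowIntegral μ) (Ico 0 1) := by
  intro x hx y hy hxy
  have hpos : ∀ᵐ m ∂μ, 0 < m ^ 2 * y ^ m - m ^ 2 * x ^ m := by
    filter_upwards [hμ] with m hm
    have := Real.rpow_lt_rpow hx.1 hxy hm
    nlinarith [pow_pos hm 2]
  have hint' := (integrable_sq_mul_rpow hμ hint hy).sub (integrable_sq_mul_rpow hμ hint hx)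
  have hsupp : 0 < μ (Function.support fun m => m ^ 2 * y ^ m - m ^ 2 * x ^ m) := by
    refine pos_iff_ne_zero.2 fun h0 => hμ0 ?_
    rw [Measure.measure_support_eq_zero_iff μ] at h0
    rw [← ae_eq_bot, ← eventually_false_iff_eq_bot]
    filter_upwards [hpos, h0] with m hm hm0
    simp_all
  have := (integral_pos_iff_support_of_nonneg_ae (hpos.mono fun _ => le_of_lt) hint').2 hsupp
  rw [integral_sub (integrable_sq_mul_rpow hμ hint hy) (integrable_sq_mul_rpow hμ hint hx)] at this
  exact sub_pos.1 this

lemma continuousOn_sqMulRpowIntegral (hμ : ∀ᵐ m ∂μ, 0 < m)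
    (hint : Integrable (fun m : ℝ => m) μ) :
    ContinuousOn (sqMulRpowIntegral μ) (Ico 0 1) := by
  intro x₀ hx₀
  obtain ⟨b, hx₀b, hb1⟩ := exists_between hx₀.2
  refine continuousWithinAt_of_dominated (bound := fun m => (-Real.log b)⁻¹ * m)
    (Eventually.of_forall fun x => by fun_prop) ?_ (hint.const_mul _) ?_
  · filter_upwards [inter_mem_nhdsWithin (Ico 0 1) (Iio_mem_nhds hx₀b)]
      with x hx
    filter_upwards [hμ] with m hm using norm_sq_mul_rpow_le hx.1.1 hx.2.le hb1 hm
  · filter_upwards [hμ] with m hm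
    exact (continuousAt_const.mul
      (Real.continuousAt_rpow_const x₀ m (Or.inr hm.le))).continuousWithinAt

lemma ofReal_sqMulRpowIntegral_lt (hμ : ∀ᵐ m ∂μ, 0 < m)
    (hint : Integrable (fun m : ℝ => m) μ) (hμ0 : μ ≠ 0) {x : ℝ} (hx : x ∈ Ico 0 1) :
    ENNReal.ofReal (sqMulRpowIntegral μ x) < ∫⁻ m, ENNReal.ofReal (m ^ 2) ∂μ := by
  obtain ⟨y, hxy, hy1⟩ := exists_between hx.2
  have hy : y ∈ Ico 0 1 := ⟨hx.1.trans hxy.le, hy1⟩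
  have hmono := strictMonoOn_sqMulRpowIntegral hμ hint hμ0
  have hy0 : 0 < sqMulRpowIntegral μ y := by
    rw [← sqMulRpowIntegral_zero hμ]; exact hmono ⟨le_rfl, one_pos⟩ hy (hx.1.trans_lt hxy)
  refine (ENNReal.ofReal_lt_ofReal_iff'.2 ⟨hmono hx hy hxy, hy0⟩).trans_le ?_
  rw [sqMulRpowIntegral, ofReal_integral_eq_lintegral_ofReal (integrable_sq_mul_rpow hμ hint hy)
    (by filter_upwards [hμ] with m hm; have := Real.rpow_nonneg hy.1 m; positivity)]
  refine lintegral_mono_ae ?_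
  filter_upwards [hμ] with m hm
  exact ENNReal.ofReal_le_ofReal
    (mul_le_of_le_one_right (sq_nonneg m) (Real.rpow_le_one hy.1 hy.2.le hm.le))

lemma exists_lt_sqMulRpowIntegral (hμ : ∀ᵐ m ∂μ, 0 < m) (hint : Integrable (fun m : ℝ => m) μ)
    {c : ℝ} (hc : ENNReal.ofReal c < ∫⁻ m, ENNReal.ofReal (m ^ 2) ∂μ) :
    ∃ x ∈ Ioo 0 1, c < sqMulRpowIntegral μ x := by
  by_contra! hle
  obtain ⟨u, hu_mono, hu_mem, hu_lim⟩ := exists_seq_strictMono_tendsto' (zero_lt_one' ℝ)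
  have hlim : Tendsto (fun n => ∫⁻ m, ENNReal.ofReal (m ^ 2 * u n ^ m) ∂μ) atTop
      (𝓝 (∫⁻ m, ENNReal.ofReal (m ^ 2) ∂μ)) := by
    refine lintegral_tendsto_of_tendsto_of_monotone (fun n => by fun_prop) ?_ ?_
    · filter_upwards [hμ] with m hm
      exact fun i j hij => ENNReal.ofReal_le_ofReal <| mul_le_mul_of_nonneg_left
        (Real.rpow_le_rpow (hu_mem i).1.le (hu_mono.monotone hij) hm.le) (sq_nonneg m)
    · filter_upwards [hμ] with m hm
      have hcont : ContinuousAt (fun x : ℝ => ENNReal.ofReal (m ^ 2 * x ^ m)) 1 :=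
        ENNReal.continuous_ofReal.continuousAt.comp
          (continuousAt_const.mul (Real.continuousAt_rpow_const 1 m (Or.inl one_ne_zero)))
      simpa [Function.comp_def] using hcont.tendsto.comp hu_lim
  refine hc.not_ge (le_of_tendsto' hlim fun n => ?_)
  have hun := Ioo_subset_Ico_self (hu_mem n)
  rw [← ofReal_integral_eq_lintegral_ofReal (integrable_sq_mul_rpow hμ hint hun)
    (by filter_upwards [hμ] with m hm; have := Real.rpow_nonneg hun.1 m; positivity)]
  exact ENNReal.ofReal_le_ofReal (hle _ (hu_mem n))

lemma exists_sqMulRpowIntegral_eq (hμ : ∀ᵐ m ∂μ, 0 < m) (hint : Integrable (fun m : ℝ => m) μ)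
    {c : ℝ} (hc0 : 0 < c) (hc : ENNReal.ofReal c < ∫⁻ m, ENNReal.ofReal (m ^ 2) ∂μ) :
    ∃ x ∈ Ioo 0 1, sqMulRpowIntegral μ x = c := by
  obtain ⟨y, hy, hcy⟩ := exists_lt_sqMulRpowIntegral hμ hint hc
  obtain ⟨x, hx, hxc⟩ := intermediate_value_Icc hy.1.le
    ((continuousOn_sqMulRpowIntegral hμ hint).mono (Icc_subset_Ico_right hy.2))
    ⟨(sqMulRpowIntegral_zero hμ).trans_le hc0.le, hcy.le⟩
  have hx0 : x ≠ 0 := by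
    rintro rfl
    rw [sqMulRpowIntegral_zero hμ] at hxc
    exact hc0.ne hxc
  exact ⟨x, ⟨hx.1.lt_of_ne' hx0, hx.2.trans_lt hy.2⟩, hxc⟩

lemma continuousOn_mulRpowIntegral (hμ : ∀ᵐ m ∂μ, 0 < m) (hint : Integrable (fun m : ℝ => m) μ) :
    ContinuousOn (mulRpowIntegral μ) (Icc 0 1) := by
  refine continuousOn_of_dominated (fun x _ => by fun_prop) (fun x hx => ?_) hint ?_
  · filter_upwards [hμ] with m hm using norm_mul_rpow_le hx hm
  · filter_upwards [hμ] with m hm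
    exact fun x _ => (continuousAt_const.mul
      (Real.continuousAt_rpow_const x m (Or.inr hm.le))).continuousWithinAt

lemma hasDerivAt_mulRpowIntegral (hμ : ∀ᵐ m ∂μ, 0 < m) (hint : Integrable (fun m : ℝ => m) μ)
    {x₀ : ℝ} (hx₀ : x₀ ∈ Ioo 0 1) :
    HasDerivAt (mulRpowIntegral μ) (sqMulRpowIntegral μ x₀ / x₀) x₀ := by
  obtain ⟨a, ha0, hax₀⟩ := exists_between hx₀.1
  obtain ⟨b, hx₀b, hb1⟩ := exists_between hx₀.2
  have key := hasDerivAt_integral_of_dominated_loc_of_deriv_le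
    (F := fun x m => m * x ^ m) (F' := fun x m => m * (m * x ^ (m - 1)))
    (bound := fun m => (-Real.log b)⁻¹ * m / a) (μ := μ) (Ioo_mem_nhds hax₀ hx₀b)
    (Eventually.of_forall fun x => by fun_prop)
    (integrable_mul_rpow hμ hint (Ioo_subset_Icc_self hx₀)) (by fun_prop) ?_
    ((hint.const_mul _).div_const _) ?_
  · refine (key.2 : HasDerivAt (mulRpowIntegral μ) _ x₀).congr_deriv ?_
    rw [sqMulRpowIntegral, ← integral_div]
    refine integral_congr_ae ?_
    filter_upwards with m
    rw [Real.rpow_sub_one hx₀.1.ne']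
    ring
  · filter_upwards [hμ] with m hm
    intro x hx
    have hx0 := ha0.trans hx.1
    rw [Real.rpow_sub_one hx0.ne', Real.norm_eq_abs, abs_of_nonneg (by positivity)]
    calc m * (m * (x ^ m / x)) = m ^ 2 * x ^ m / x := by ring
      _ ≤ (-Real.log b)⁻¹ * m / a := by
        have := (Real.le_norm_self _).trans (norm_sq_mul_rpow_le hx0.le hx.2.le hb1 hm)
        have : 0 ≤ m ^ 2 * x ^ m := by positivity
        gcongr
        · linarith
        · exact hx.1.le
  · filter_upwards [hμ] with m hm
    exact fun x hx => (Real.hasDerivAt_rpow_const (Or.inl (ha0.trans hx.1).ne')).const_mul m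

lemma hasDerivAt_mul_exp_mul_sub {g : ℝ → ℝ} {x d t M : ℝ} (hx : x ≠ 0)
    (hg : HasDerivAt g (d / x) x) :
    HasDerivAt (fun y => y * Real.exp (t * (M - g y)))
      (Real.exp (t * (M - g x)) * (1 - t * d)) x := by
  refine ((hasDerivAt_id' x).fun_mul
    (((hasDerivAt_const x M).fun_sub hg).const_mul t).exp).congr_deriv ?_
  field_simp
  ring

lemma strictMonoOn_mul_exp (hμ : ∀ᵐ m ∂μ, 0 < m) (hint : Integrable (fun m : ℝ => m) μ)
    {t M a b : ℝ} (ha : 0 ≤ a) (hb : b ≤ 1) (hlt : ∀ x ∈ Ioo a b, t * sqMulRpowIntegral μ x < 1) :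
    StrictMonoOn (fun x => x * Real.exp (t * (M - mulRpowIntegral μ x))) (Icc a b) := by
  refine strictMonoOn_of_deriv_pos (convex_Icc a b) ?_ fun x hx => ?_
  · have := (continuousOn_mulRpowIntegral hμ hint).mono (Icc_subset_Icc ha hb)
    fun_prop
  rw [interior_Icc] at hx
  have hx01 : x ∈ Ioo 0 1 := ⟨ha.trans_lt hx.1, hx.2.trans_le hb⟩
  rw [(hasDerivAt_mul_exp_mul_sub hx01.1.ne' (hasDerivAt_mulRpowIntegral hμ hint hx01)).deriv]
  exact mul_pos (Real.exp_pos _) (sub_pos.2 (hlt x hx))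

lemma strictAntiOn_mul_exp (hμ : ∀ᵐ m ∂μ, 0 < m) (hint : Integrable (fun m : ℝ => m) μ)
    {t M a b : ℝ} (ha : 0 ≤ a) (hb : b ≤ 1) (hgt : ∀ x ∈ Ioo a b, 1 < t * sqMulRpowIntegral μ x) :
    StrictAntiOn (fun x => x * Real.exp (t * (M - mulRpowIntegral μ x))) (Icc a b) := by
  refine strictAntiOn_of_deriv_neg (convex_Icc a b) ?_ fun x hx => ?_
  · have := (continuousOn_mulRpowIntegral hμ hint).mono (Icc_subset_Icc ha hb)
    fun_prop
  rw [interior_Icc] at hx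
  have hx01 : x ∈ Ioo 0 1 := ⟨ha.trans_lt hx.1, hx.2.trans_le hb⟩
  rw [(hasDerivAt_mul_exp_mul_sub hx01.1.ne' (hasDerivAt_mulRpowIntegral hμ hint hx01)).deriv]
  exact mul_neg_of_pos_of_neg (Real.exp_pos _) (sub_neg.2 (hgt x hx))

end

lemma mul_lt_one_of_le_inv_toReal {t a : ℝ} {K : ℝ≥0∞} (ht : 0 ≤ t) (htK : t ≤ K⁻¹.toReal)
    (ha : ENNReal.ofReal a < K) : t * a < 1 := by
  rcases ht.eq_or_lt with rfl | ht
  · simp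
  rcases le_or_gt a 0 with ha0 | ha0
  · nlinarith
  have hK : K ≠ ⊤ := by
    rintro rfl
    simp at htK
    linarith
  rw [ENNReal.ofReal_lt_iff_lt_toReal ha0.le hK] at ha
  rw [ENNReal.toReal_inv] at htK
  calc t * a < t * K.toReal := by gcongr
    _ ≤ K.toReal⁻¹ * K.toReal := by gcongr
    _ = 1 := inv_mul_cancel₀ (ha0.trans ha).ne'

lemma ofReal_inv_lt_of_inv_toReal_lt {t : ℝ} {K : ℝ≥0∞} (hK : K ≠ 0) (ht : K⁻¹.toReal < t) :
    ENNReal.ofReal t⁻¹ < K := by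
  rw [ENNReal.ofReal_inv_of_pos (ENNReal.toReal_nonneg.trans_lt ht), ENNReal.inv_lt_iff_inv_lt,
    ENNReal.lt_ofReal_iff_toReal_lt (ENNReal.inv_ne_top.2 hK)]
  exact ht

theorem stmt_5_general (μ₀ : Measure ℝ) (hμ₀ : μ₀ ≠ 0)
    (hsupp : μ₀ (Set.Iic (0:ℝ)) = 0)
    (M₀ : ℝ)
    (hintm : Integrable (fun m : ℝ => m) μ₀)
    (K : ℝ≥0∞) (hKpos : 0 < K)
    (hK : ∫⁻ m, ENNReal.ofReal (m ^ 2) ∂μ₀ = K)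
    (g₀ : ℝ → ℝ)
    (hg₀ : ∀ x ∈ Set.Icc (0:ℝ) 1, g₀ x = ∫ m, m * x ^ m ∂μ₀)
    (φ : ℝ → ℝ → ℝ)
    (hφ : ∀ t x, φ t x = x * Real.exp (t * (M₀ - g₀ x))) :
    (∀ t, 0 ≤ t → t ≤ (K⁻¹).toReal → StrictMonoOn (φ t) (Set.Icc (0:ℝ) 1)) ∧
    (∀ t, (K⁻¹).toReal < t →
      ∃! mt, mt ∈ Set.Ioo (0:ℝ) 1 ∧ t * mt * deriv g₀ mt = 1 ∧
        StrictMonoOn (φ t) (Set.Icc (0:ℝ) mt) ∧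
        StrictAntiOn (φ t) (Set.Icc mt 1)) := by
  have hμ : ∀ᵐ m ∂μ₀, 0 < m := ae_iff.2 (by simp only [not_lt]; exact hsupp)
  subst hK
  have hφ_eq (t : ℝ) : EqOn (fun x => x * Real.exp (t * (M₀ - mulRpowIntegral μ₀ x))) (φ t)
      (Icc 0 1) := fun x hx => by rw [hφ, hg₀ x hx]; rfl
  have hderiv {x : ℝ} (hx : x ∈ Ioo 0 1) : x * deriv g₀ x = sqMulRpowIntegral μ₀ x := by
    have hg : g₀ =ᶠ[𝓝 x] mulRpowIntegral μ₀ :=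
      eventually_of_mem (Ioo_mem_nhds hx.1 hx.2) fun y hy => hg₀ y (Ioo_subset_Icc_self hy)
    rw [hg.deriv_eq, (hasDerivAt_mulRpowIntegral hμ hintm hx).deriv, mul_div_cancel₀ _ hx.1.ne']
  have hmono := strictMonoOn_sqMulRpowIntegral hμ hintm hμ₀
  refine ⟨fun t ht0 htK => ?_, fun t htK => ?_⟩
  · refine (strictMonoOn_mul_exp hμ hintm le_rfl le_rfl fun x hx => ?_).congr (hφ_eq t)
    exact mul_lt_one_of_le_inv_toReal ht0 htK
      (ofReal_sqMulRpowIntegral_lt hμ hintm hμ₀ (Ioo_subset_Ico_self hx))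
  have ht0 : 0 < t := ENNReal.toReal_nonneg.trans_lt htK
  obtain ⟨c, hc, hct⟩ := exists_sqMulRpowIntegral_eq hμ hintm (inv_pos.2 ht0)
    (ofReal_inv_lt_of_inv_toReal_lt hKpos.ne' htK)
  have hc' := Ioo_subset_Ico_self hc
  have htc : t * sqMulRpowIntegral μ₀ c = 1 := by rw [hct, mul_inv_cancel₀ ht0.ne']
  refine ⟨c, ⟨hc, by rw [mul_assoc, hderiv hc, htc], ?_, ?_⟩, ?_⟩
  · refine (strictMonoOn_mul_exp hμ hintm le_rfl hc.2.le fun x hx => ?_).congr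
      ((hφ_eq t).mono (Icc_subset_Icc_right hc.2.le))
    exact htc ▸ mul_lt_mul_of_pos_left (hmono ⟨hx.1.le, hx.2.trans hc.2⟩ hc' hx.2) ht0
  · refine (strictAntiOn_mul_exp hμ hintm hc.1.le le_rfl fun x hx => ?_).congr
      ((hφ_eq t).mono (Icc_subset_Icc_left hc.1.le))
    exact htc ▸ mul_lt_mul_of_pos_left (hmono hc' ⟨hc.1.le.trans hx.1.le, hx.2⟩ hx.1) ht0
  · rintro x ⟨hx, hxt, -, -⟩
    rw [mul_assoc, hderiv hx, ← htc] at hxt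
    exact hmono.injOn (Ioo_subset_Ico_self hx) hc' (mul_left_cancel₀ ht0.ne' hxt)

/-- With `φ_t(x) = x e^{t(M₀ - g₀(x))}`: for `t ≤ 1/K` (with
`1/∞ = 0`), `φ_t` is strictly increasing on `[0,1]`; for `t > 1/K` there is a
unique `m_t ∈ (0,1)` with `t m_t g₀'(m_t) = 1`, and `φ_t` is increasing on
`[0,m_t]` and decreasing on `[m_t,1]`. -/
theorem stmt_5 (μ₀ : Measure ℝ) [IsFiniteMeasure μ₀] (hμ₀ : μ₀ ≠ 0)
    (hsupp : μ₀ (Set.Iic (0:ℝ)) = 0)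
    (M₀ : ℝ) (hM₀pos : 0 < M₀)
    (hintm : Integrable (fun m : ℝ => m) μ₀)
    (hM₀ : ∫ m, m ∂μ₀ = M₀)
    (K : ℝ≥0∞) (hKpos : 0 < K)
    (hK : ∫⁻ m, ENNReal.ofReal (m ^ 2) ∂μ₀ = K)
    (g₀ : ℝ → ℝ)
    (hg₀ : ∀ x ∈ Set.Icc (0:ℝ) 1, g₀ x = ∫ m, m * x ^ m ∂μ₀)
    (φ : ℝ → ℝ → ℝ)
    (hφ : ∀ t x, φ t x = x * Real.exp (t * (M₀ - g₀ x))) :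
    (∀ t, 0 ≤ t → t ≤ (K⁻¹).toReal → StrictMonoOn (φ t) (Set.Icc (0:ℝ) 1)) ∧
    (∀ t, (K⁻¹).toReal < t →
      ∃! mt, mt ∈ Set.Ioo (0:ℝ) 1 ∧ t * mt * deriv g₀ mt = 1 ∧
        StrictMonoOn (φ t) (Set.Icc (0:ℝ) mt) ∧
        StrictAntiOn (φ t) (Set.Icc mt 1)) :=
  stmt_5_general μ₀ hμ₀ hsupp M₀ hintm K hKpos hK g₀ hg₀ φ hφ
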